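/- Let G be a totally ordered abelian group, μ a finite subset of {g < 1}, and A, B, S nonzero Hahn series in R[[G]] with grid-based supports. Assume μ witnesses S (i.e., supp S ⊆ (mag S)·μ*). If A ≺^μ B then A·S ≺^μ B·S, and if A ≼^μ B then A·S ≼^μ B·S. (Key point: (mag B)(mag S) ∈ supp(B·S) because there can be no cancellation at that monomial, using the witness hypothesis.) -/

import Mathlib

/- Additive convention: magnitude of a Hahn series is `HahnSeries.order` (least exponent);
a monomial is small iff its exponent is positive; a ratio set is a finite set of
positive exponents. -/

/-- `μ⁺`: finite nonempty sums of elements of `s`. -/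
def addPlus {Γ : Type*} [AddCommMonoid Γ] (s : Set Γ) : Set Γ :=
  {x | ∃ a ∈ s, ∃ b ∈ AddSubmonoid.closure s, x = a + b}

/-- `A ≺^μ B`. -/
def hPrec {Γ : Type*} [AddCommGroup Γ] [LinearOrder Γ] [IsOrderedAddMonoid Γ] (μ : Set Γ)
    (A B : HahnSeries Γ ℝ) : Prop :=
  ∀ a ∈ A.support, ∃ b ∈ B.support, ∃ p ∈ addPlus μ, a = b + p

/-- `A ≼^μ B`. -/
def hPrecEq {Γ : Type*} [AddCommGroup Γ] [LinearOrder Γ] [IsOrderedAddMonoid Γ] (μ : Set Γ)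
    (A B : HahnSeries Γ ℝ) : Prop :=
  ∀ a ∈ A.support, ∃ b ∈ B.support, ∃ p ∈ AddSubmonoid.closure μ, a = b + p

/-- `μ` witnesses `S`: `supp S ⊆ mag S + μ*`. -/
def hWitnesses {Γ : Type*} [AddCommGroup Γ] [LinearOrder Γ] [IsOrderedAddMonoid Γ] (μ : Set Γ)
    (S : HahnSeries Γ ℝ) : Prop :=
  ∀ a ∈ S.support, ∃ p ∈ AddSubmonoid.closure μ, a = S.order + p

/-! For `b ∈ supp B` take the least `b' ∈ supp B` with `b ∈ b' + μ*`. Any other way of writing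
`b' + mag S` as an exponent of `B` plus an exponent `mag S + q` of `S` (`q ∈ μ*`, so `q ≥ 0`)
would give a smaller such `b'`, so there is no cancellation at `b' + mag S`: it lies in
`supp (B S)`, and `b + mag S ∈ (b' + mag S) + μ*`. Multiplying `A ≺^μ B` (or `A ≼^μ B`) by `S`
therefore only adds elements of `μ*` to the witnessing exponents. -/

theorem AddSubmonoid.nonneg_of_mem_closure {Γ : Type*} [AddCommMonoid Γ] [Preorder Γ]
    [IsOrderedAddMonoid Γ] {s : Set Γ} (hs : ∀ x ∈ s, 0 ≤ x) {q : Γ}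
    (hq : q ∈ AddSubmonoid.closure s) : 0 ≤ q := by
  induction hq using AddSubmonoid.closure_induction with
  | mem x hx => exact hs x hx
  | zero => exact le_rfl
  | add _ _ _ _ hx hy => exact add_nonneg hx hy

theorem add_mem_addPlus {Γ : Type*} [AddCommMonoid Γ] {s : Set Γ} {p q : Γ}
    (hp : p ∈ addPlus s) (hq : q ∈ AddSubmonoid.closure s) : p + q ∈ addPlus s := by
  obtain ⟨a, ha, b, hb, rfl⟩ := hp
  exact ⟨a, ha, b + q, add_mem hb hq, add_assoc a b q⟩

namespace HahnSeries

theorem coeff_mul_add_of_unique {Γ R : Type*} [AddCommMonoid Γ] [PartialOrder Γ]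
    [IsOrderedCancelAddMonoid Γ] [NonUnitalNonAssocSemiring R] {x y : HahnSeries Γ R} {a b : Γ}
    (huniq : ∀ a' ∈ x.support, ∀ b' ∈ y.support, a' + b' = a + b → a' = a ∧ b' = b) :
    (x * y).coeff (a + b) = x.coeff a * y.coeff b := by
  rw [coeff_mul]
  refine Finset.sum_eq_single (a, b) (fun ⟨a', b'⟩ hab hne => ?_) (fun hab => ?_)
  · obtain ⟨ha', hb', hsum⟩ := Finset.mem_antidiagonal.1 hab
    exact absurd (Prod.ext_iff.2 (huniq a' ha' b' hb' hsum)) hne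
  · by_cases ha : x.coeff a = 0
    · rw [ha, zero_mul]
    · have hb : y.coeff b = 0 := by
        by_contra hb
        exact hab (Finset.mem_antidiagonal.2 ⟨ha, hb, rfl⟩)
      rw [hb, mul_zero]

variable {Γ R : Type*} [AddCommGroup Γ] [LinearOrder Γ] [IsOrderedAddMonoid Γ]
  [Semiring R] [NoZeroDivisors R] {M : AddSubmonoid Γ} {T : Set Γ} {A B S : HahnSeries Γ R}

theorem exists_mem_support_mul_add_mem (hM : ∀ q ∈ M, 0 ≤ q) (hS : S ≠ 0)
    (hSM : ∀ a ∈ S.support, ∃ q ∈ M, a = S.order + q) {b : Γ} (hb : b ∈ B.support) :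
    ∃ c ∈ (B * S).support, ∃ r ∈ M, b + S.order = c + r := by
  set C : Set Γ := {b' ∈ B.support | b - b' ∈ M}
  have hCne : C.Nonempty := ⟨b, hb, by rw [sub_self]; exact M.zero_mem⟩
  have hCwf : C.IsWF := B.isPWO_support.isWF.mono fun _ hx => hx.1
  obtain ⟨b', hb', hb'_min⟩ : ∃ b' ∈ C, ∀ x ∈ C, b' ≤ x :=
    ⟨_, hCwf.min_mem hCne, fun _ => hCwf.min_le hCne⟩
  have huniq : ∀ x ∈ B.support, ∀ y ∈ S.support, x + y = b' + S.order →
      x = b' ∧ y = S.order := by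
    rintro x hx y hy hxy
    obtain ⟨q, hqM, rfl⟩ := hSM y hy
    have hxq : x + q = b' := by
      apply add_right_cancel (b := S.order)
      rw [← hxy]; abel
    have hxC : x ∈ C := ⟨hx, by
      rw [show b - x = (b - b') + q by rw [← hxq]; abel]; exact M.add_mem hb'.2 hqM⟩
    have hq : q = 0 := le_antisymm (by simpa [← hxq] using hb'_min x hxC) (hM q hqM)
    subst hq
    exact ⟨by simpa using hxq, add_zero _⟩
  refine ⟨b' + S.order, ?_, b - b', hb'.2, by abel⟩
  rw [mem_support, coeff_mul_add_of_unique huniq]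
  exact mul_ne_zero hb'.1 (coeff_order_eq_zero.not.2 hS)

theorem support_dominated_mul_right (hM : ∀ q ∈ M, 0 ≤ q) (hT : ∀ p ∈ T, ∀ q ∈ M, p + q ∈ T)
    (hS : S ≠ 0) (hSM : ∀ a ∈ S.support, ∃ q ∈ M, a = S.order + q)
    (hAB : ∀ a ∈ A.support, ∃ b ∈ B.support, ∃ p ∈ T, a = b + p) :
    ∀ a ∈ (A * S).support, ∃ c ∈ (B * S).support, ∃ p ∈ T, a = c + p := by
  intro a ha
  obtain ⟨a', ha', s, hs, rfl⟩ := Set.mem_add.1 (support_mul_subset ha)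
  obtain ⟨b, hb, p, hp, rfl⟩ := hAB a' ha'
  obtain ⟨q, hq, rfl⟩ := hSM s hs
  obtain ⟨c, hc, r, hr, hbc⟩ := exists_mem_support_mul_add_mem hM hS hSM hb
  refine ⟨c, hc, p + (r + q), hT p hp _ (M.add_mem hr hq), ?_⟩
  calc b + p + (S.order + q) = b + S.order + p + q := by abel
    _ = c + (p + (r + q)) := by rw [hbc]; abel

end HahnSeries

theorem stmt16_general {Γ : Type*} [AddCommGroup Γ] [LinearOrder Γ] [IsOrderedAddMonoid Γ]
    (μ : Finset Γ) (hμ : ∀ x ∈ μ, 0 < x)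
    (A B S : HahnSeries Γ ℝ) (hS : S ≠ 0)
    (hwit : hWitnesses (μ : Set Γ) S) :
    (hPrec (μ : Set Γ) A B → hPrec (μ : Set Γ) (A * S) (B * S)) ∧
    (hPrecEq (μ : Set Γ) A B → hPrecEq (μ : Set Γ) (A * S) (B * S)) := by
  have hM : ∀ q ∈ AddSubmonoid.closure (μ : Set Γ), 0 ≤ q :=
    fun _ => AddSubmonoid.nonneg_of_mem_closure fun x hx => (hμ x hx).le
  exact
    ⟨HahnSeries.support_dominated_mul_right hM (fun _ hp _ hq => add_mem_addPlus hp hq) hS hwit,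
      HahnSeries.support_dominated_mul_right hM (fun _ hp _ hq => add_mem hp hq) hS hwit⟩

/-- If `μ` witnesses `S`, then `A ≺^μ B` implies `A·S ≺^μ B·S`, and
`A ≼^μ B` implies `A·S ≼^μ B·S`. -/
theorem stmt16 {Γ : Type*} [AddCommGroup Γ] [LinearOrder Γ] [IsOrderedAddMonoid Γ]
    (μ : Finset Γ) (hμ : ∀ x ∈ μ, 0 < x)
    (A B S : HahnSeries Γ ℝ) (hA : A ≠ 0) (hB : B ≠ 0) (hS : S ≠ 0)
    (hwit : hWitnesses (μ : Set Γ) S) :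
    (hPrec (μ : Set Γ) A B → hPrec (μ : Set Γ) (A * S) (B * S)) ∧
    (hPrecEq (μ : Set Γ) A B → hPrecEq (μ : Set Γ) (A * S) (B * S)) :=
  stmt16_general μ hμ A B S hS hwit
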